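/- Let n ≥ 2 and let G be a group with a, b ∈ G satisfying b a b^{-1} = a^{2^{n−1} − 1} (as holds in the semidihedral group of order 2^{n+1}). Then for every ℓ ≥ 2, all integers α_1,…,α_ℓ and all β_1,…,β_ℓ ∈ {0,1}, the left-normed commutator satisfies [a^{α_1} b^{β_1}, …, a^{α_ℓ} b^{β_ℓ}] = a^{2^{ℓ−1}(1 − 2^{n−2})^{ℓ−1}·β_3 ⋯ β_ℓ·(α_1 β_2 − α_2 β_1)}. -/

import Mathlib

/-!
Conjugation by `b` multiplies exponents of `a` by `m = 2^{n-1} - 1`, so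
`a^p b^s · a^q b^t = a^{p + m^s q} b^{s+t}`, and comparing with the product in the other order gives
`[a^p b^s, a^q b^t] = a^{p(1 - m^t) - q(1 - m^s)}`. In particular every commutator is a power of
`a`, and commuting a power `a^E` with `a^α b^β` multiplies `E` by `1 - m^β`. For `β ∈ {0, 1}` this
factor is `(1 - m) β`, and `1 - m = 2 (1 - 2^{n-2})`.
-/

open scoped commutatorElement

/-- The left-normed commutator `[x₁, x₂, …, x_ℓ] = [[x₁, …, x_{ℓ-1}], x_ℓ]`,
with the conventions that the empty list gives `1` and a singleton gives its
entry. -/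
def leftNormedCommutator {G : Type*} [Group G] : List G → G
  | [] => 1
  | x :: xs => xs.foldl (fun acc y => ⁅acc, y⁆) x

theorem leftNormedCommutator_append_singleton {G : Type*} [Group G] {l : List G} (hl : l ≠ [])
    (y : G) : leftNormedCommutator (l ++ [y]) = ⁅leftNormedCommutator l, y⁆ := by
  obtain ⟨x, xs, rfl⟩ := List.exists_cons_of_ne_nil hl
  simp [leftNormedCommutator, List.foldl_append]

theorem commutatorElement_eq_of_mul_eq {G : Type*} [Group G] {x y z : G}
    (h : x * y = z * (y * x)) : ⁅x, y⁆ = z := by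
  rw [commutatorElement_def, h]
  group

theorem one_sub_pow_eq_mul_of_eq_zero_or_eq_one (m : ℤ) {t : ℕ} (ht : t = 0 ∨ t = 1) :
    1 - m ^ t = (1 - m) * t := by
  rcases ht with rfl | rfl <;> simp

section Twisted

variable {G : Type*} [Group G] {a b : G} {m : ℤ}

theorem pow_mul_zpow_of_mul_mul_inv_eq (h : b * a * b⁻¹ = a ^ m) (s : ℕ) (k : ℤ) :
    b ^ s * a ^ k = a ^ (m ^ s * k) * b ^ s := by
  induction s generalizing k with
  | zero => simp
  | succ s ih =>
    have hb : b * a ^ k = a ^ (m * k) * b := by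
      rw [zpow_mul, ← h, conj_zpow]
      group
    rw [pow_succ, mul_assoc, hb, ← mul_assoc, ih, pow_succ, mul_comm m, mul_assoc (m ^ s)]
    group

theorem zpow_mul_pow_mul_zpow_mul_pow (h : b * a * b⁻¹ = a ^ m) (p q : ℤ) (s t : ℕ) :
    a ^ p * b ^ s * (a ^ q * b ^ t) = a ^ (p + m ^ s * q) * b ^ (s + t) := by
  rw [mul_assoc, ← mul_assoc (b ^ s), pow_mul_zpow_of_mul_mul_inv_eq h, zpow_add, pow_add]
  group

theorem commutatorElement_zpow_mul_pow (h : b * a * b⁻¹ = a ^ m) (p q : ℤ) (s t : ℕ) :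
    ⁅a ^ p * b ^ s, a ^ q * b ^ t⁆ = a ^ (p * (1 - m ^ t) - q * (1 - m ^ s)) := by
  apply commutatorElement_eq_of_mul_eq
  rw [zpow_mul_pow_mul_zpow_mul_pow h, zpow_mul_pow_mul_zpow_mul_pow h, ← mul_assoc, ← zpow_add,
    add_comm t]
  congr 2
  ring

theorem leftNormedCommutator_range_map_zpow_mul_pow (h : b * a * b⁻¹ = a ^ m) (α : ℕ → ℤ)
    (β : ℕ → ℕ) {L : ℕ} (hL : 2 ≤ L) :
    leftNormedCommutator ((List.range L).map fun i => a ^ α i * b ^ β i)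
      = a ^ ((∏ i ∈ Finset.Ico 2 L, (1 - m ^ β i)) *
          (α 0 * (1 - m ^ β 1) - α 1 * (1 - m ^ β 0))) := by
  induction L, hL using Nat.le_induction with
  | base =>
    rw [Finset.Ico_self, Finset.prod_empty, one_mul]
    exact commutatorElement_zpow_mul_pow h (α 0) (α 1) (β 0) (β 1)
  | succ L hL ih =>
    rw [List.range_succ, List.map_append, List.map_singleton,
      leftNormedCommutator_append_singleton (by simp; omega), ih, ← mul_one (a ^ _), ← pow_zero b,
      commutatorElement_zpow_mul_pow h, Finset.prod_Ico_succ_top (by omega)]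
    congr 1
    ring

end Twisted

/-- Let `n ≥ 2` and suppose `b a b⁻¹ = a^(2^{n−1} − 1)` (as in
the semidihedral group of order `2^{n+1}`). Then for `ℓ ≥ 2` and
`β₁, …, β_ℓ ∈ {0,1}`,
`[a^α₁ b^β₁, …, a^α_ℓ b^β_ℓ]
  = a^(2^{ℓ−1}(1 − 2^{n−2})^{ℓ−1}·β₃⋯β_ℓ·(α₁β₂ − α₂β₁))`
(indices shifted to start at `0`). -/
theorem leftNormedCommutator_semidihedral
    {G : Type*} [Group G] (a b : G) (n : ℕ) (hn : 2 ≤ n)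
    (h : b * a * b⁻¹ = a ^ ((2 : ℤ) ^ (n - 1) - 1))
    (ℓ : ℕ) (hℓ : 2 ≤ ℓ) (α : ℕ → ℤ) (β : ℕ → ℕ)
    (hβ : ∀ i, β i = 0 ∨ β i = 1) :
    leftNormedCommutator ((List.range ℓ).map fun i => a ^ α i * b ^ β i)
      = a ^ ((2 : ℤ) ^ (ℓ - 1) * (1 - (2 : ℤ) ^ (n - 2)) ^ (ℓ - 1) *
          (∏ i ∈ Finset.Ico 2 ℓ, (β i : ℤ)) *
          (α 0 * (β 1 : ℤ) - α 1 * (β 0 : ℤ))) := by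
  have h_one_sub : 1 - ((2 : ℤ) ^ (n - 1) - 1) = 2 * (1 - 2 ^ (n - 2)) := by
    rw [show n - 1 = n - 2 + 1 by omega, pow_succ]
    ring
  rw [leftNormedCommutator_range_map_zpow_mul_pow h α β hℓ]
  simp only [one_sub_pow_eq_mul_of_eq_zero_or_eq_one _ (hβ _), Finset.prod_mul_distrib,
    Finset.prod_const, Nat.card_Ico, h_one_sub]
  rw [show ℓ - 1 = ℓ - 2 + 1 by omega]
  congr 1
  ring
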